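/- (Proposition 3.2) If the Lanczos L-biorthogonalization data up to step m exists, then for all 1 ≤ i, j ≤ m: ⟨W_i, L²(V_j)⟩ = α_j if i = j, ⟨W_i, L²(V_j)⟩ = δ_{j+1} if i = j+1, ⟨W_i, L²(V_j)⟩ = β_j if i = j−1, and ⟨W_i, L²(V_j)⟩ = 0 if |i − j| > 1; that is, the matrix with entries ⟨W_i, L²(V_j)⟩ is the tridiagonal matrix T_m. -/
import Mathlib


open scoped Matrix

/-- A tensor in `ℝ^{I₁ × ⋯ × I_N}`: a real-valued function on multi-indices. -/
abbrev Tensor {N : ℕ} (I : Fin N → ℕ) := (∀ n, Fin (I n)) → ℝ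

/-- Inner product `⟨X, Y⟩ = ∑ᵢ X(i) Y(i)`. -/
noncomputable def tinner {N : ℕ} {I : Fin N → ℕ} (X Y : Tensor I) : ℝ :=
  ∑ i : ∀ n, Fin (I n), X i * Y i

/-- Norm `‖X‖ = ⟨X, X⟩^{1/2}`. -/
noncomputable def tnorm {N : ℕ} {I : Fin N → ℕ} (X : Tensor I) : ℝ :=
  Real.sqrt (tinner X X)

/-- The Sylvester operator `L(X) = X ×₁ A₁ + ⋯ + X ×_N A_N`. -/
noncomputable def sylvOp {N : ℕ} {I : Fin N → ℕ}
    (A : ∀ n, Matrix (Fin (I n)) (Fin (I n)) ℝ) (X : Tensor I) : Tensor I :=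
  fun i => ∑ n : Fin N, ∑ j : Fin (I n), A n (i n) j * X (Function.update i n j)

/-- The transposed Sylvester operator `L^T`, with each `Aₙ` replaced by `Aₙᵀ`. -/
noncomputable def sylvOpT {N : ℕ} {I : Fin N → ℕ}
    (A : ∀ n, Matrix (Fin (I n)) (Fin (I n)) ℝ) : Tensor I → Tensor I :=
  sylvOp (fun n => (A n)ᵀ)

/-- The Lanczos `L`-biorthogonalization data up to step `m` (Algorithm 1),
with no breakdown: `δ_{j+1} ≠ 0` and `β_{j+1} ≠ 0` for `j = 1,…,m`. -/
structure LanczosData {N : ℕ} {I : Fin N → ℕ}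
    (A : ∀ n, Matrix (Fin (I n)) (Fin (I n)) ℝ) (m : ℕ) where
  V : ℕ → Tensor I
  W : ℕ → Tensor I
  Vb : ℕ → Tensor I
  Wb : ℕ → Tensor I
  α : ℕ → ℝ
  δ : ℕ → ℝ
  β : ℕ → ℝ
  hV0 : V 0 = 0
  hW0 : W 0 = 0
  hδ1 : δ 1 = 0
  hβ1 : β 1 = 0
  hWLV1 : tinner (W 1) (sylvOp A (V 1)) = 1
  hα : ∀ j, 1 ≤ j → j ≤ m →
    α j = tinner (sylvOp A (sylvOp A (V j))) (W j)
  hVb : ∀ j, 1 ≤ j → j ≤ m →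
    Vb (j + 1) = sylvOp A (V j) - α j • V j - β j • V (j - 1)
  hWb : ∀ j, 1 ≤ j → j ≤ m →
    Wb (j + 1) = sylvOpT A (W j) - α j • W j - δ j • W (j - 1)
  hδ : ∀ j, 1 ≤ j → j ≤ m →
    δ (j + 1) = Real.sqrt |tinner (Wb (j + 1)) (sylvOp A (Vb (j + 1)))|
  hδne : ∀ j, 1 ≤ j → j ≤ m → δ (j + 1) ≠ 0
  hβ : ∀ j, 1 ≤ j → j ≤ m →
    β (j + 1) = tinner (Wb (j + 1)) (sylvOp A (Vb (j + 1))) / δ (j + 1)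
  hβne : ∀ j, 1 ≤ j → j ≤ m → β (j + 1) ≠ 0
  hVnext : ∀ j, 1 ≤ j → j ≤ m → V (j + 1) = (δ (j + 1))⁻¹ • Vb (j + 1)
  hWnext : ∀ j, 1 ≤ j → j ≤ m → W (j + 1) = (β (j + 1))⁻¹ • Wb (j + 1)

section AuxLanczos

variable {N : ℕ} {I : Fin N → ℕ} {A : ∀ n, Matrix (Fin (I n)) (Fin (I n)) ℝ}

lemma tinner_comm (X Y : Tensor I) : tinner X Y = tinner Y X :=
  Finset.sum_congr rfl fun i _ => mul_comm _ _

lemma tinner_zero_left (Y : Tensor I) : tinner (0 : Tensor I) Y = 0 := by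
  simp [tinner]

lemma tinner_zero_right (X : Tensor I) : tinner X (0 : Tensor I) = 0 := by
  simp [tinner]

lemma tinner_smul_left (c : ℝ) (X Y : Tensor I) : tinner (c • X) Y = c * tinner X Y := by
  simp [tinner, Finset.mul_sum, mul_assoc]

lemma tinner_smul_right (c : ℝ) (X Y : Tensor I) : tinner X (c • Y) = c * tinner X Y := by
  simp [tinner, Finset.mul_sum, mul_left_comm]

lemma tinner_add_left (X Y Z : Tensor I) : tinner (X + Y) Z = tinner X Z + tinner Y Z := by
  simp [tinner, add_mul, Finset.sum_add_distrib]

lemma tinner_add_right (X Y Z : Tensor I) : tinner X (Y + Z) = tinner X Y + tinner X Z := by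
  simp [tinner, mul_add, Finset.sum_add_distrib]

lemma tinner_sub_left (X Y Z : Tensor I) : tinner (X - Y) Z = tinner X Z - tinner Y Z := by
  simp [tinner, sub_mul, Finset.sum_sub_distrib]

lemma tinner_sub_right (X Y Z : Tensor I) : tinner X (Y - Z) = tinner X Y - tinner X Z := by
  simp [tinner, mul_sub, Finset.sum_sub_distrib]

lemma sylvOp_zero : sylvOp A (0 : Tensor I) = 0 := by
  funext i; simp [sylvOp]

lemma sylvOp_add (X Y : Tensor I) : sylvOp A (X + Y) = sylvOp A X + sylvOp A Y := by
  funext i; simp [sylvOp, mul_add, Finset.sum_add_distrib]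

lemma sylvOp_sub (X Y : Tensor I) : sylvOp A (X - Y) = sylvOp A X - sylvOp A Y := by
  funext i; simp [sylvOp, mul_sub, Finset.sum_sub_distrib]

lemma sylvOp_smul (c : ℝ) (X : Tensor I) : sylvOp A (c • X) = c • sylvOp A X := by
  funext i; simp [sylvOp, Finset.mul_sum, mul_left_comm]

lemma swap_sum (n : Fin N) (F : ((∀ k, Fin (I k)) × Fin (I n)) → ℝ) :
    ∑ p : (∀ k, Fin (I k)) × Fin (I n), F (Function.update p.1 n p.2, p.1 n)
      = ∑ p : (∀ k, Fin (I k)) × Fin (I n), F p := by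
  have hinv : Function.Involutive
      (fun p : (∀ k, Fin (I k)) × Fin (I n) => ((Function.update p.1 n p.2, p.1 n) : (∀ k, Fin (I k)) × Fin (I n))) := by
    intro p
    simp [Function.update_idem]
  exact Fintype.sum_bijective _ hinv.bijective _ _ (fun p => rfl)

lemma adjoint (X Y : Tensor I) :
    tinner (sylvOpT A X) Y = tinner X (sylvOp A Y) := by
  unfold tinner sylvOpT sylvOp
  simp only [Finset.sum_mul, Finset.mul_sum, Matrix.transpose_apply]
  rw [Finset.sum_comm]
  conv_rhs => rw [Finset.sum_comm]
  refine Finset.sum_congr rfl fun n _ => ?_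
  rw [← Fintype.sum_prod_type', ← Fintype.sum_prod_type']
  rw [← swap_sum n (fun p => X p.1 * (A n (p.1 n) p.2 * Y (Function.update p.1 n p.2)))]
  refine Finset.sum_congr rfl fun p _ => ?_
  simp only [Function.update_self, Function.update_idem, Function.update_eq_self]
  ring

variable {m : ℕ} (L : LanczosData A m)

lemma LVexp (j : ℕ) (h1 : 1 ≤ j) (hm : j ≤ m) :
    sylvOp A (L.V j) = L.δ (j+1) • L.V (j+1) + L.α j • L.V j + L.β j • L.V (j-1) := by
  have h2 : L.δ (j+1) • L.V (j+1) = L.Vb (j+1) := by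
    rw [L.hVnext j h1 hm, smul_smul, mul_inv_cancel₀ (L.hδne j h1 hm), one_smul]
  rw [h2, L.hVb j h1 hm]; abel

lemma LTWexp (j : ℕ) (h1 : 1 ≤ j) (hm : j ≤ m) :
    sylvOpT A (L.W j) = L.β (j+1) • L.W (j+1) + L.α j • L.W j + L.δ j • L.W (j-1) := by
  have h2 : L.β (j+1) • L.W (j+1) = L.Wb (j+1) := by
    rw [L.hWnext j h1 hm, smul_smul, mul_inv_cancel₀ (L.hβne j h1 hm), one_smul]
  rw [h2, L.hWb j h1 hm]; abel

lemma L2exp (i j : ℕ) (h1 : 1 ≤ j) (hm : j ≤ m) :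
    tinner (L.W i) (sylvOp A (sylvOp A (L.V j))) =
      L.δ (j+1) * tinner (L.W i) (sylvOp A (L.V (j+1)))
      + L.α j * tinner (L.W i) (sylvOp A (L.V j))
      + L.β j * tinner (L.W i) (sylvOp A (L.V (j-1))) := by
  conv_lhs => rw [LVexp L j h1 hm]
  rw [sylvOp_add, sylvOp_add, sylvOp_smul, sylvOp_smul, sylvOp_smul,
      tinner_add_right, tinner_add_right, tinner_smul_right, tinner_smul_right,
      tinner_smul_right]

lemma L2exp' (i j : ℕ) (h1 : 1 ≤ i) (hm : i ≤ m) :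
    tinner (L.W i) (sylvOp A (sylvOp A (L.V j))) =
      L.β (i+1) * tinner (L.W (i+1)) (sylvOp A (L.V j))
      + L.α i * tinner (L.W i) (sylvOp A (L.V j))
      + L.δ i * tinner (L.W (i-1)) (sylvOp A (L.V j)) := by
  rw [← adjoint, LTWexp L i h1 hm, tinner_add_left, tinner_add_left,
      tinner_smul_left, tinner_smul_left, tinner_smul_left]

lemma bio : ∀ k, k ≤ m + 1 → ∀ i ≤ k, ∀ j ≤ k,
    tinner (L.W i) (sylvOp A (L.V j)) = if i = j ∧ i ≠ 0 then 1 else 0 := by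
  intro k
  induction k with
  | zero =>
    intro _ i hi j hj
    have hi0 : i = 0 := by omega
    subst hi0
    rw [L.hW0, tinner_zero_left, if_neg (by simp)]
  | succ k IH =>
    intro hk i hi j hj
    have hkm : k ≤ m := by omega
    -- trivial zero cases
    by_cases hi0 : i = 0
    · subst hi0
      rw [L.hW0, tinner_zero_left, if_neg (by simp)]
    by_cases hj0 : j = 0
    · subst hj0
      rw [L.hV0, sylvOp_zero, tinner_zero_right, if_neg (by omega)]
    by_cases hik : i ≤ k
    · by_cases hjk : j ≤ k
      · exact IH (by omega) i hik j hjk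
      · -- j = k + 1, 1 ≤ i ≤ k, hence k ≥ 1
        have hj' : j = k + 1 := by omega
        subst hj'
        have hk1 : 1 ≤ k := by omega
        have e1 : tinner (L.W i) (sylvOp A (L.V (k+1)))
            = (L.δ (k+1))⁻¹ * (tinner (L.W i) (sylvOp A (sylvOp A (L.V k)))
                - L.α k * tinner (L.W i) (sylvOp A (L.V k))
                - L.β k * tinner (L.W i) (sylvOp A (L.V (k-1)))) := by
          rw [L.hVnext k hk1 hkm, sylvOp_smul, tinner_smul_right, L.hVb k hk1 hkm,
              sylvOp_sub, sylvOp_sub, sylvOp_smul, sylvOp_smul,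
              tinner_sub_right, tinner_sub_right, tinner_smul_right, tinner_smul_right]
        by_cases hikk : i = k
        · subst hikk
          have e2 : tinner (L.W i) (sylvOp A (sylvOp A (L.V i))) = L.α i := by
            rw [tinner_comm]; exact (L.hα i hk1 hkm).symm
          rw [e1, e2, IH (by omega) i le_rfl i le_rfl,
              IH (by omega) i le_rfl (i-1) (by omega)]
          rw [if_pos ⟨rfl, by omega⟩, if_neg (by omega), if_neg (by omega)]
          ring
        · -- 1 ≤ i < k
          have hi' : i + 1 ≤ k := by omega
          rw [e1, L2exp' L i k (by omega) (by omega),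
              IH (by omega) (i+1) hi' k le_rfl,
              IH (by omega) i (by omega) k le_rfl,
              IH (by omega) (i-1) (by omega) k le_rfl,
              IH (by omega) i (by omega) (k-1) (by omega)]
          rw [if_neg (show ¬(i = k ∧ i ≠ 0) by omega),
              if_neg (show ¬(i-1 = k ∧ i-1 ≠ 0) by omega),
              if_neg (show ¬(i = k+1 ∧ i ≠ 0) by omega)]
          by_cases hc : i + 1 = k
          · rw [if_pos (show i+1 = k ∧ i+1 ≠ 0 from ⟨hc, by omega⟩),
                if_pos (show i = k-1 ∧ i ≠ 0 from ⟨by omega, hi0⟩), hc]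
            ring
          · rw [if_neg (show ¬(i+1 = k ∧ i+1 ≠ 0) by omega),
                if_neg (show ¬(i = k-1 ∧ i ≠ 0) by omega)]
            ring
    · -- i = k + 1
      have hi' : i = k + 1 := by omega
      subst hi'
      by_cases hjk : j ≤ k
      · -- 1 ≤ j ≤ k, so k ≥ 1
        have hk1 : 1 ≤ k := by omega
        have e1 : tinner (L.W (k+1)) (sylvOp A (L.V j))
            = (L.β (k+1))⁻¹ * (tinner (L.W k) (sylvOp A (sylvOp A (L.V j)))
                - L.α k * tinner (L.W k) (sylvOp A (L.V j))
                - L.δ k * tinner (L.W (k-1)) (sylvOp A (L.V j))) := by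
          rw [L.hWnext k hk1 hkm, tinner_smul_left, L.hWb k hk1 hkm,
              tinner_sub_left, tinner_sub_left, tinner_smul_left, tinner_smul_left,
              adjoint]
        by_cases hjkk : j = k
        · subst hjkk
          have e2 : tinner (L.W j) (sylvOp A (sylvOp A (L.V j))) = L.α j := by
            rw [tinner_comm]; exact (L.hα j hk1 hkm).symm
          rw [e1, e2, IH (by omega) j le_rfl j le_rfl,
              IH (by omega) (j-1) (by omega) j le_rfl]
          rw [if_pos ⟨rfl, by omega⟩, if_neg (by omega), if_neg (by omega)]
          ring
        · -- 1 ≤ j < k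
          have hj' : j + 1 ≤ k := by omega
          rw [e1, L2exp L k j (by omega) (by omega),
              IH (by omega) k le_rfl (j+1) hj',
              IH (by omega) k le_rfl j (by omega),
              IH (by omega) k le_rfl (j-1) (by omega),
              IH (by omega) (k-1) (by omega) j (by omega)]
          rw [if_neg (show ¬(k = j ∧ k ≠ 0) by omega),
              if_neg (show ¬(k = j-1 ∧ k ≠ 0) by omega),
              if_neg (show ¬(k+1 = j ∧ k+1 ≠ 0) by omega)]
          by_cases hc : k = j + 1
          · rw [if_pos (show k = j+1 ∧ k ≠ 0 from ⟨hc, by omega⟩),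
                if_pos (show k-1 = j ∧ k-1 ≠ 0 from ⟨by omega, by omega⟩), hc]
            ring
          · rw [if_neg (show ¬(k = j+1 ∧ k ≠ 0) by omega),
                if_neg (show ¬(k-1 = j ∧ k-1 ≠ 0) by omega)]
            ring
      · -- i = j = k + 1
        have hj' : j = k + 1 := by omega
        subst hj'
        by_cases hk0 : k = 0
        · subst hk0
          rw [if_pos ⟨rfl, by omega⟩]
          exact L.hWLV1
        · have hk1 : 1 ≤ k := by omega
          have hs : tinner (L.Wb (k+1)) (sylvOp A (L.Vb (k+1)))
              = L.β (k+1) * L.δ (k+1) := by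
            have hb := L.hβ k hk1 hkm
            field_simp [L.hδne k hk1 hkm] at hb
            linarith [hb]
          rw [L.hWnext k hk1 hkm, L.hVnext k hk1 hkm, tinner_smul_left,
              sylvOp_smul, tinner_smul_right, hs, if_pos ⟨rfl, by omega⟩]
          field_simp
          exact div_self (mul_ne_zero (L.hβne k hk1 hkm) (L.hδne k hk1 hkm))


end AuxLanczos

/-- Proposition 3.2: the matrix `(⟨W_i, L²(V_j)⟩)` is the
tridiagonal matrix `T_m`: `⟨W_i, L²(V_j)⟩ = α_j` if `i = j`, `δ_{j+1}` if
`i = j+1`, `β_j` if `i = j-1`, and `0` if `|i - j| > 1`. -/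
theorem lanczos_tridiagonal {N : ℕ} (hN : 1 ≤ N) (I : Fin N → ℕ) (hI : ∀ n, 0 < I n)
    (A : ∀ n, Matrix (Fin (I n)) (Fin (I n)) ℝ) (m : ℕ)
    (L : LanczosData A m) (i j : ℕ) (hi1 : 1 ≤ i) (him : i ≤ m)
    (hj1 : 1 ≤ j) (hjm : j ≤ m) :
    tinner (L.W i) (sylvOp A (sylvOp A (L.V j))) =
      if i = j then L.α j
      else if i = j + 1 then L.δ (j + 1)
      else if i + 1 = j then L.β j
      else 0 := by
  rw [L2exp L i j hj1 hjm,
      bio L (m+1) le_rfl i (by omega) (j+1) (by omega),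
      bio L (m+1) le_rfl i (by omega) j (by omega),
      bio L (m+1) le_rfl i (by omega) (j-1) (by omega)]
  split_ifs <;> first | ring1 | (exfalso; omega)
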